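/- Let X_n = (X_{i,n})_{i=1}^n be i.i.d. ℝ^d-valued random vectors under each P ∈ 𝒫_n, and suppose there exist numbers c_L < c_U, ε > 0, and a coordinate j ∈ {1,…,d} such that the j-th entry X_{ij,n} of X_{i,n} satisfies P{X_{ij,n} = c_L} > ε and P{X_{ij,n} = c_U} > ε for all P ∈ 𝒫_n. Then for any R > 0 there exists c_R > 0 such that for all n ≥ 1 and all P ∈ 𝒫_n: c_R ≤ sup_{t∈ℝ^d:‖t‖>R} (1/(2π²)) E_P[inf_{q∈ℤ}(t'(X_{1,n}−X_{2,n})−2πq)²]. -/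

import Mathlib

open MeasureTheory ProbabilityTheory Real
open scoped BigOperators ENNReal NNReal

noncomputable section

/-- Euclidean space ℝ^d. -/
abbrev Ed (d : ℕ) := EuclideanSpace ℝ (Fin d)

variable {d : ℕ}

/-- The characteristic function of a (Borel) measure on ℝ^d. -/
def charFn (μ : Measure (Ed d)) (t : Ed d) : ℂ :=
  ∫ x, Complex.exp (((inner ℝ t x : ℝ) : ℂ) * Complex.I) ∂μ

/-- Partial derivative in the k-th coordinate direction. -/
def partialD {F : Type*} [NormedAddCommGroup F] [NormedSpace ℝ F]
    (k : Fin d) (f : Ed d → F) : Ed d → F :=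
  fun x => fderiv ℝ f x (EuclideanSpace.single k 1)

/-- Iterated partial derivative `D^ν` for a multi-index ν. -/
def mDeriv {F : Type*} [NormedAddCommGroup F] [NormedSpace ℝ F]
    (ν : Fin d → ℕ) (f : Ed d → F) : Ed d → F :=
  (List.finRange d).foldr (fun k g => (partialD k)^[ν k] g) f

/-- The ν-th cumulant of a measure μ on ℝ^d:
`κ_ν = (−i)^{|ν|} D^ν (log φ_μ)(0)` where φ_μ is the characteristic function. -/
def cumulant (μ : Measure (Ed d)) (ν : Fin d → ℕ) : ℂ :=
  (-Complex.I) ^ (∑ k, ν k) * mDeriv ν (fun t => Complex.log (charFn μ t)) 0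

/-- The finite set of multi-indices ν ∈ ℤ₊^d with |ν| = j. -/
def multiIdx (d j : ℕ) : Finset (Fin d → ℕ) :=
  (Fintype.piFinset fun _ : Fin d => Finset.range (j + 1)).filter fun ν => ∑ k, ν k = j

/-- The differential operator `χ̄_j(−D)` applied to f, where
`χ̄_j(z) = j! Σ_{|ν|=j} (χ_ν/ν!) z^ν`. -/
def chiOpApply (χ : (Fin d → ℕ) → ℂ) (j : ℕ) (f : Ed d → ℂ) : Ed d → ℂ :=
  fun x => (j.factorial : ℂ) * (-1 : ℂ) ^ j *
    ∑ ν ∈ multiIdx d j, (χ ν / ∏ k, ((ν k).factorial : ℂ)) * mDeriv ν f x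

/-- The Edgeworth polynomial operator `P̃_j(−D; {χ_ν})` applied to f:
`P̃_j = Σ_{m=1}^{j} (1/m!) Σ*_{j_1+⋯+j_m=j} ∏_k χ̄_{j_k+2}(−D)/(j_k+2)!`,
encoded as a sum over compositions of j. -/
def edgeworthOp (χ : (Fin d → ℕ) → ℂ) (j : ℕ) (f : Ed d → ℂ) : Ed d → ℂ :=
  fun x => ∑ c : Composition j, ((c.length.factorial : ℂ))⁻¹ *
    (c.blocks.foldr
      (fun jk g => fun y => (((jk + 2).factorial : ℂ))⁻¹ * chiOpApply χ (jk + 2) g y) f) x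

/-- The standard normal density on ℝ^d. -/
def gaussDensity (d : ℕ) (x : Ed d) : ℝ :=
  (2 * π) ^ (-(d : ℝ) / 2) * Real.exp (-‖x‖ ^ 2 / 2)

/-- The density of the order-s Edgeworth signed measure
`Σ_{j=0}^{s−2} n^{−j/2} P̃_j(−D;{χ_ν}) φ(x)`. -/
def edgeworthDensity (χ : (Fin d → ℕ) → ℂ) (n s : ℕ) (x : Ed d) : ℝ :=
  (∑ j ∈ Finset.range (s - 1), (((n : ℝ) ^ (-(j : ℝ) / 2) : ℝ) : ℂ) *
    edgeworthOp χ j (fun y => ((gaussDensity d y : ℝ) : ℂ)) x).re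

/-- The order-s Edgeworth signed measure, as a set function `A ↦ ∫_A (density)`. -/
def edgeworthSM (χ : (Fin d → ℕ) → ℂ) (n s : ℕ) (A : Set (Ed d)) : ℝ :=
  ∫ x in A, edgeworthDensity χ n s x

/-- The standard normal distribution Φ = N(0, I_d) on ℝ^d. -/
def stdGaussian (d : ℕ) : Measure (Ed d) :=
  volume.withDensity fun x => ENNReal.ofReal (gaussDensity d x)

/-- Modulus of continuity `ω_f(x;ε) = sup {|f z − f y| : z,y ∈ B(x;ε)}`. -/
def oscil (f : Ed d → ℝ) (x : Ed d) (ε : ℝ) : ℝ :=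
  sSup {r | ∃ z ∈ Metric.ball x ε, ∃ y ∈ Metric.ball x ε, r = |f z - f y|}

/-- Averaged modulus of continuity `ω̄_f(ε;μ) = ∫ ω_f(x;ε) dμ(x)`. -/
def oscilBar (f : Ed d → ℝ) (ε : ℝ) (μ : Measure (Ed d)) : ℝ :=
  ∫ x, oscil f x ε ∂μ

/-- `M_s(f) = sup_x |f(x)|/(1+‖x‖^s)`. -/
def Msup (s : ℕ) (f : Ed d → ℝ) : ℝ := ⨆ x : Ed d, |f x| / (1 + ‖x‖ ^ s)

/-- The (uncentered) second-moment matrix `E[X X']` of a measure on ℝ^d. -/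
def covMat (μ : Measure (Ed d)) : Matrix (Fin d) (Fin d) ℝ :=
  Matrix.of fun k l => ∫ x, x k * x l ∂μ

open Classical in
/-- Inverse square root of a matrix (junk value if not positive semidefinite). -/
def matInvSqrt (M : Matrix (Fin d) (Fin d) ℝ) : Matrix (Fin d) (Fin d) ℝ :=
  if h : M.PosSemidef then ((h.1.eigenvectorUnitary : Matrix (Fin d) (Fin d) ℝ) * Matrix.diagonal (fun i => Real.sqrt (h.1.eigenvalues i)) *
      (star h.1.eigenvectorUnitary : Matrix (Fin d) (Fin d) ℝ))⁻¹ else 1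

open Classical in
/-- Square root of a matrix (junk value if not positive semidefinite). -/
def matSqrt (M : Matrix (Fin d) (Fin d) ℝ) : Matrix (Fin d) (Fin d) ℝ :=
  if h : M.PosSemidef then (h.1.eigenvectorUnitary : Matrix (Fin d) (Fin d) ℝ) * Matrix.diagonal (fun i => Real.sqrt (h.1.eigenvalues i)) *
      (star h.1.eigenvectorUnitary : Matrix (Fin d) (Fin d) ℝ) else 1

/-- Matrix-vector multiplication on Euclidean space. -/
def mulVecE (M : Matrix (Fin d) (Fin d) ℝ) (x : Ed d) : Ed d :=
  (EuclideanSpace.equiv (Fin d) ℝ).symm (M.mulVec (EuclideanSpace.equiv (Fin d) ℝ x))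

/-- Marginal distribution of the i-th coordinate. -/
def marginal {n : ℕ} (P : Measure (Fin n → Ed d)) (i : Fin n) : Measure (Ed d) :=
  P.map fun ω => ω i

/-- `V_{n,P} = (1/n) Σ_i Var_P(X_{i,n})` (for mean-zero coordinates). -/
def Vmat {d : ℕ} (n : ℕ) (P : Measure (Fin n → Ed d)) : Matrix (Fin d) (Fin d) ℝ :=
  (n : ℝ)⁻¹ • ∑ i : Fin n, covMat (marginal P i)

/-- `Q_{n,P}`, the distribution of `n^{−1/2} Σ_i V_{n,P}^{−1/2} X_{i,n}`. -/
def Qmeas {d : ℕ} (n : ℕ) (P : Measure (Fin n → Ed d)) : Measure (Ed d) :=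
  P.map fun ω => (Real.sqrt n)⁻¹ • ∑ i, mulVecE (matInvSqrt (Vmat n P)) (ω i)

/-- `χ̄_{ν,P}`, the average over i of the ν-th cumulant of `V_{n,P}^{−1/2} X_{i,n}`. -/
def chiBar {d : ℕ} (n : ℕ) (P : Measure (Fin n → Ed d)) (ν : Fin d → ℕ) : ℂ :=
  (n : ℂ)⁻¹ * ∑ i : Fin n, cumulant ((marginal P i).map (mulVecE (matInvSqrt (Vmat n P)))) ν

/-- `ρ_{n,s,P} = (1/n) Σ_i E_P ‖X_{i,n}‖^s`. -/
def rhoM {d : ℕ} (n s : ℕ) (P : Measure (Fin n → Ed d)) : ℝ :=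
  (n : ℝ)⁻¹ * ∑ i : Fin n, ∫ ω, ‖ω i‖ ^ s ∂P

/-- The mean weak Cramér condition with parameter (b,c,R) for a collection of
joint distributions of (X_{i,n})_{i=1}^n. -/
def meanWeakCramer {d : ℕ} {n : ℕ} (Ps : Set (Measure (Fin n → Ed d))) (b c R : ℝ) : Prop :=
  ∀ P ∈ Ps, ∀ t : Ed d, R < ‖t‖ →
    (n : ℝ)⁻¹ * ∑ i : Fin n, ‖charFn (marginal P i) t‖ ≤ 1 - c / ‖t‖ ^ b

/-- The weak Cramér condition with parameter (b,c,R) for a single distribution. -/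
def weakCramerMeas (μ : Measure (Ed d)) (b c R : ℝ) : Prop :=
  ∀ t : Ed d, R < ‖t‖ → ‖charFn μ t‖ ≤ 1 - c / ‖t‖ ^ b

/-- The empirical (resampling) measure `(1/n) Σ_j δ_{x_j}`. -/
def empMeas {d n : ℕ} (x : Fin n → Ed d) : Measure (Ed d) :=
  ((n : ℝ≥0∞))⁻¹ • ∑ i : Fin n, Measure.dirac (x i)

/-- Sample mean. -/
def sMean {d n : ℕ} (x : Fin n → Ed d) : Ed d := (n : ℝ)⁻¹ • ∑ i, x i

/-- Sample covariance matrix `V̂_n`. -/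
def Vhat {d n : ℕ} (x : Fin n → Ed d) : Matrix (Fin d) (Fin d) ℝ :=
  (n : ℝ)⁻¹ • ∑ i : Fin n, Matrix.of fun k l => (x i k - sMean x k) * (x i l - sMean x l)

/-- The bootstrap distribution `Q_{n,ℱ_n}`: the conditional distribution, given the
sample x, of `√n V̂_n^{−1/2}(X̄* − X̄)` where `X̄*` is the mean of n i.i.d. draws from
the empirical measure of x. -/
def bootQ {d n : ℕ} (x : Fin n → Ed d) : Measure (Ed d) :=
  (Measure.pi fun _ : Fin n => empMeas x).map
    fun y => Real.sqrt n • mulVecE (matInvSqrt (Vhat x)) (sMean y - sMean x)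

/-- `χ*_ν`, the ν-th cumulant of the conditional distribution of a bootstrap draw
given the sample, i.e. of the empirical measure. -/
def bootChi {d n : ℕ} (x : Fin n → Ed d) (ν : Fin d → ℕ) : ℂ := cumulant (empMeas x) ν

/-- `Q̃_{n,ℱ_n}`, the Edgeworth signed measure built from the bootstrap cumulants. -/
def bootQtilde {d n : ℕ} (s : ℕ) (x : Fin n → Ed d) (A : Set (Ed d)) : ℝ :=
  edgeworthSM (bootChi x) n s A

/-- Event `ℰ_{n,0}(ρ̄) = {(1/n) Σ ‖X_i‖^s ≤ ρ̄}`. -/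
def Ev0 {d : ℕ} (n s : ℕ) (ρ : ℝ) : Set (Fin n → Ed d) :=
  {x | (n : ℝ)⁻¹ * ∑ i, ‖x i‖ ^ s ≤ ρ}

/-- Event `ℰ_{n,1}(c₁) = {smallest eigenvalue of V̂_n ≥ c₁}` (via the quadratic form). -/
def Ev1 {d : ℕ} (n : ℕ) (c₁ : ℝ) : Set (Fin n → Ed d) :=
  {x | ∀ v : Ed d, c₁ * ‖v‖ ^ 2 ≤ (inner ℝ v (mulVecE (Vhat x) v) : ℝ)}

/-- Event `ℰ_{n,2}(c₂)`: all mixed absolute moments of the sample of order ≤ s are ≤ c₂. -/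
def Ev2 {d : ℕ} (n s : ℕ) (c₂ : ℝ) : Set (Fin n → Ed d) :=
  {x | ∀ v : Fin d → ℕ, (∑ k, v k) ≤ s → (n : ℝ)⁻¹ * ∑ i, ∏ k, |x i k| ^ (v k) ≤ c₂}

/-- `ξ(u,v;t) = inf_{q∈ℤ} (t'(u−v) − 2πq)²`. -/
def xiFn {d : ℕ} (t u v : Ed d) : ℝ := ⨅ q : ℤ, ((inner ℝ t (u - v) : ℝ) - 2 * π * (q : ℝ)) ^ 2

/-- Condition (★): `c_R ≤ sup_{‖t‖>R} (1/(2π²)) E_P[inf_q (t'(X₁−X₂) − 2πq)²]`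
for X₁, X₂ i.i.d. with distribution P. -/
def condStar {d : ℕ} (P : Measure (Ed d)) (R cR : ℝ) : Prop :=
  cR ≤ ⨆ t : {t : Ed d // R < ‖t‖},
    (2 * π ^ 2)⁻¹ * ∫ p : Ed d × Ed d, xiFn t.1 p.1 p.2 ∂(P.prod P)

/-! Choose `t = c eⱼ` with `c (c_U − c_L)` an odd multiple of `π` and `|c| > R`. Whenever the
`j`-th coordinates of `X₁` and `X₂` are `c_U` and `c_L`, `t'(X₁ − X₂)` lies at distance exactly `π`
from `2πℤ`, so the integrand attains its maximum `π²` on an event of probability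
`P{Xⱼ = c_U} P{Xⱼ = c_L} > ε²`; hence the supremum in (★) is at least `ε² / 2`. -/

lemma xiFn_nonneg (t u v : Ed d) : 0 ≤ xiFn t u v :=
  le_ciInf fun _ => sq_nonneg _

lemma xiFn_le_pi_sq (t u v : Ed d) : xiFn t u v ≤ π ^ 2 := by
  set b : ℝ := inner ℝ t (u - v)
  have hbdd : BddBelow (Set.range fun q : ℤ => (b - 2 * π * q) ^ 2) :=
    ⟨0, by rintro _ ⟨q, rfl⟩; exact sq_nonneg _⟩
  set q := round (b / (2 * π))
  have hq : |b / (2 * π) - q| ≤ 1 / 2 := abs_sub_round _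
  calc xiFn t u v ≤ (b - 2 * π * q) ^ 2 := ciInf_le hbdd q
    _ = (2 * π) ^ 2 * (b / (2 * π) - q) ^ 2 := by field_simp
    _ ≤ (2 * π) ^ 2 * (1 / 2) ^ 2 :=
      mul_le_mul_of_nonneg_left (sq_le_sq' (neg_le_of_abs_le hq) (le_of_abs_le hq)) (sq_nonneg _)
    _ = π ^ 2 := by ring

lemma one_le_sq_two_mul_add_one (k : ℤ) : (1 : ℝ) ≤ ((2 * k + 1 : ℤ) : ℝ) ^ 2 := by
  have hk : (1 : ℤ) ≤ |2 * k + 1| := Int.one_le_abs (by omega)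
  exact_mod_cast one_le_sq_iff_one_le_abs _ |>.2 hk

lemma xiFn_eq_pi_sq_of_inner_eq_odd_mul_pi {t u v : Ed d} (k : ℤ)
    (h : inner ℝ t (u - v) = (2 * k + 1) * π) : xiFn t u v = π ^ 2 := by
  refine le_antisymm (xiFn_le_pi_sq t u v) (le_ciInf fun q => ?_)
  calc π ^ 2 = π ^ 2 * 1 := (mul_one _).symm
    _ ≤ π ^ 2 * ((2 * (k - q) + 1 : ℤ) : ℝ) ^ 2 := by gcongr; exact one_le_sq_two_mul_add_one _
    _ = _ := by rw [h]; push_cast; ring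

lemma measurable_xiFn (t : Ed d) : Measurable fun p : Ed d × Ed d => xiFn t p.1 p.2 :=
  Measurable.iInf fun _ => by fun_prop

lemma integrable_xiFn (t : Ed d) (μ : Measure (Ed d × Ed d)) [IsFiniteMeasure μ] :
    Integrable (fun p => xiFn t p.1 p.2) μ :=
  Integrable.of_bound (measurable_xiFn t).aestronglyMeasurable (π ^ 2) <| ae_of_all _ fun p => by
    rw [Real.norm_of_nonneg (xiFn_nonneg _ _ _)]
    exact xiFn_le_pi_sq _ _ _

lemma integral_xiFn_le_pi_sq (t : Ed d) (μ : Measure (Ed d × Ed d)) [IsProbabilityMeasure μ] :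
    ∫ p, xiFn t p.1 p.2 ∂μ ≤ π ^ 2 := by
  simpa using integral_mono (integrable_xiFn t μ) (integrable_const (π ^ 2))
    fun p => xiFn_le_pi_sq t p.1 p.2

lemma exists_odd_mul_pi_div_gt {a : ℝ} (ha : 0 < a) (R : ℝ) :
    ∃ k : ℕ, R < (2 * k + 1) * π / a := by
  obtain ⟨k, hk⟩ := exists_nat_gt (R * a / π)
  refine ⟨k, ?_⟩
  rw [div_lt_iff₀ pi_pos] at hk
  rw [lt_div_iff₀ ha]
  nlinarith [pi_pos, (Nat.cast_nonneg k : (0 : ℝ) ≤ k)]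

lemma pi_sq_mul_atoms_le_integral_xiFn (P : Measure (Ed d)) [IsProbabilityMeasure P] (j : Fin d)
    {cL cU c : ℝ} (k : ℤ) (hc : c * (cU - cL) = (2 * k + 1) * π) :
    π ^ 2 * (P.real {x | x j = cU} * P.real {x | x j = cL}) ≤
      ∫ p : Ed d × Ed d, xiFn (EuclideanSpace.single j c) p.1 p.2 ∂(P.prod P) := by
  have hmax : {x : Ed d | x j = cU} ×ˢ {x | x j = cL} ⊆
      {p | π ^ 2 ≤ xiFn (EuclideanSpace.single j c) p.1 p.2} := by
    rintro ⟨u, v⟩ ⟨hu : u j = cU, hv : v j = cL⟩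
    refine (xiFn_eq_pi_sq_of_inner_eq_odd_mul_pi k ?_).ge
    simpa [EuclideanSpace.inner_single_left, hu, hv] using hc
  calc π ^ 2 * (P.real {x | x j = cU} * P.real {x | x j = cL})
      = π ^ 2 * (P.prod P).real ({x : Ed d | x j = cU} ×ˢ {x | x j = cL}) := by
        rw [measureReal_prod_prod]
    _ ≤ π ^ 2 * (P.prod P).real {p | π ^ 2 ≤ xiFn (EuclideanSpace.single j c) p.1 p.2} :=
        mul_le_mul_of_nonneg_left (measureReal_mono hmax) (sq_nonneg _)
    _ ≤ _ := mul_meas_ge_le_integral_of_nonneg (ae_of_all _ fun _ => xiFn_nonneg _ _ _)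
        (integrable_xiFn _ _) _

lemma condStar_of_atoms (P : Measure (Ed d)) [IsProbabilityMeasure P] (j : Fin d) {cL cU : ℝ}
    (hLU : cL ≠ cU) (R : ℝ) :
    condStar P R (P.real {x | x j = cU} * P.real {x | x j = cL} / 2) := by
  have ha : 0 < |cU - cL| := abs_pos.2 (sub_ne_zero.2 hLU.symm)
  obtain ⟨k, hk⟩ := exists_odd_mul_pi_div_gt ha R
  set c := (2 * k + 1) * π / (cU - cL)
  have hc : c * (cU - cL) = (2 * (k : ℤ) + 1) * π := by
    push_cast
    exact div_mul_cancel₀ _ (sub_ne_zero.2 hLU.symm)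
  have ht : R < ‖EuclideanSpace.single j c‖ := by
    rwa [PiLp.norm_single, Real.norm_eq_abs, abs_div, abs_of_pos (by positivity)]
  have hbdd : BddAbove (Set.range fun t : {t : Ed d // R < ‖t‖} =>
      (2 * π ^ 2)⁻¹ * ∫ p : Ed d × Ed d, xiFn t.1 p.1 p.2 ∂(P.prod P)) :=
    ⟨(2 * π ^ 2)⁻¹ * π ^ 2, by
      rintro _ ⟨t, rfl⟩
      exact mul_le_mul_of_nonneg_left (integral_xiFn_le_pi_sq _ _) (by positivity)⟩
  refine le_ciSup_of_le hbdd ⟨_, ht⟩ ?_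
  calc P.real {x | x j = cU} * P.real {x | x j = cL} / 2
      = (2 * π ^ 2)⁻¹ * (π ^ 2 * (P.real {x | x j = cU} * P.real {x | x j = cL})) := by
        field_simp
    _ ≤ _ := by gcongr; exact pi_sq_mul_atoms_le_integral_xiFn P j k hc

theorem condStar_of_two_atoms_general
    (d : ℕ)
    (Ps : ℕ → Set (Measure (Ed d)))
    (hprob : ∀ n, ∀ P ∈ Ps n, IsProbabilityMeasure P)
    (cL cU ε : ℝ) (hLU : cL < cU) (hε : 0 < ε) (j : Fin d)
    (hatomL : ∀ n, 1 ≤ n → ∀ P ∈ Ps n, ε < (P {x : Ed d | x j = cL}).toReal)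
    (hatomU : ∀ n, 1 ≤ n → ∀ P ∈ Ps n, ε < (P {x : Ed d | x j = cU}).toReal)
    (R : ℝ) :
    ∃ cR : ℝ, 0 < cR ∧ ∀ n, 1 ≤ n → ∀ P ∈ Ps n, condStar P R cR := by
  refine ⟨ε ^ 2 / 2, by positivity, fun n hn P hP => ?_⟩
  have := hprob n P hP
  refine le_trans ?_ (condStar_of_atoms P j hLU.ne R)
  have hL : ε < P.real {x | x j = cL} := hatomL n hn P hP
  have hU : ε < P.real {x | x j = cU} := hatomU n hn P hP
  rw [sq]
  gcongr

/-- **Proposition 3.2(i).** If each `P ∈ 𝒫ₙ` gives mass more than ε to two distinct point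
values c_L < c_U of some coordinate j, then condition (★) holds for some `c_R > 0`: for
all `n ≥ 1` and all `P ∈ 𝒫ₙ`,
`c_R ≤ sup_{‖t‖>R} (1/(2π²)) E_P[inf_{q∈ℤ}(t'(X₁−X₂) − 2πq)²]`. -/
theorem condStar_of_two_atoms
    (d : ℕ) (hd : 1 ≤ d)
    (Ps : ℕ → Set (Measure (Ed d)))
    (hprob : ∀ n, ∀ P ∈ Ps n, IsProbabilityMeasure P)
    (cL cU ε : ℝ) (hLU : cL < cU) (hε : 0 < ε) (j : Fin d)
    (hatomL : ∀ n, 1 ≤ n → ∀ P ∈ Ps n, ε < (P {x : Ed d | x j = cL}).toReal)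
    (hatomU : ∀ n, 1 ≤ n → ∀ P ∈ Ps n, ε < (P {x : Ed d | x j = cU}).toReal)
    (R : ℝ) (hR : 0 < R) :
    ∃ cR : ℝ, 0 < cR ∧ ∀ n, 1 ≤ n → ∀ P ∈ Ps n, condStar P R cR :=
  condStar_of_two_atoms_general d Ps hprob cL cU ε hLU hε j hatomL hatomU R
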